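/- arXiv:2112.11871 — 2 statements merged into one kernel-verified Lean document; each statement's English description precedes it below -/
import Mathlib

section
/- Let n ≥ 2 and let M, N : I^n → I be n-variable means (i.e., min(x_1,…,x_n) ≤ M(x_1,…,x_n) ≤ max(x_1,…,x_n) for all x_1,…,x_n ∈ I, and similarly for N) that are twice continuously differentiable at every point of the diagonal of I^n. If (∂_i M)^Δ = (∂_i N)^Δ on I for every i ∈ {1,…,n} and, at every point of I, the symmetric (n−1)×(n−1)-matrix with (i,j)-entry (∂_i∂_j N)^Δ − (∂_i∂_j M)^Δ, for i, j ∈ {1,…,n−1}, is positive definite, then M is locally smaller than N. -/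
/-!
Put `D = N - M`. Since means are reflexive and the first partial derivatives agree on the
diagonal, `D` and its gradient vanish at every diagonal point. Given `y` near `(x₀, …, x₀)`,
walk from the diagonal point `(yₙ, …, yₙ)` to `y`: the direction `w = y - (yₙ, …, yₙ)` has last
coordinate `0`, and on that hyperplane the Hessian of `D` is positive definite at `(x₀, …, x₀)`
by hypothesis, hence (by compactness of its unit sphere and continuity of the Hessian) positive
semidefinite nearby. So `D` is convex along the walk, which starts at a critical zero of `D`,
and therefore `D y ≥ 0`.
-/

open Set Function Real

/-- The `n`-variable generalized Bajraktarević mean `A_{f,p}` on the interval `I`: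
`A_{f,p}(x) = f⁻¹((∑ pᵢ(xᵢ) f(xᵢ)) / (∑ pᵢ(xᵢ)))`. -/
noncomputable def bajMean {n : ℕ} (I : Set ℝ) (f : ℝ → ℝ) (p : Fin n → ℝ → ℝ)
    (x : Fin n → ℝ) : ℝ :=
  Function.invFunOn f I ((∑ i, p i (x i) * f (x i)) / (∑ i, p i (x i)))

/-- The `i`-th first-order partial derivative of `Φ : Iⁿ → ℝ`. -/
noncomputable def pder {n : ℕ} (Φ : (Fin n → ℝ) → ℝ) (i : Fin n) (y : Fin n → ℝ) : ℝ :=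
  deriv (fun t => Φ (Function.update y i t)) (y i)

/-- The second-order partial derivative `∂ᵢ∂ⱼΦ`. -/
noncomputable def pder2 {n : ℕ} (Φ : (Fin n → ℝ) → ℝ) (i j : Fin n) :
    (Fin n → ℝ) → ℝ :=
  pder (pder Φ j) i

/-- `M` is locally smaller than `N`: there is an open set `U ⊆ Iⁿ` containing the
diagonal of `Iⁿ` on which `M ≤ N`. -/
def LocallySmaller {n : ℕ} (I : Set ℝ) (M N : (Fin n → ℝ) → ℝ) : Prop :=
  ∃ U : Set (Fin n → ℝ), IsOpen U ∧ U ⊆ {x | ∀ i, x i ∈ I} ∧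
    (∀ x ∈ I, (fun _ => x) ∈ U) ∧ ∀ x ∈ U, M x ≤ N x

open Filter Topology

lemma add_deriv_le_of_deriv2_nonneg {g g' g'' : ℝ → ℝ}
    (hg : ∀ t ∈ Icc (0 : ℝ) 1, HasDerivAt g (g' t) t)
    (hg' : ∀ t ∈ Icc (0 : ℝ) 1, HasDerivAt g' (g'' t) t)
    (hg'' : ∀ t ∈ Icc (0 : ℝ) 1, 0 ≤ g'' t) :
    g 0 + g' 0 ≤ g 1 := by
  have hmono : MonotoneOn g' (Icc 0 1) :=
    monotoneOn_of_hasDerivWithinAt_nonneg (convex_Icc 0 1)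
      (fun t ht => (hg' t ht).continuousAt.continuousWithinAt)
      (fun t ht => (hg' t (interior_subset ht)).hasDerivWithinAt)
      (fun t ht => hg'' t (interior_subset ht))
  obtain ⟨ξ, hξ, hslope⟩ := exists_hasDerivAt_eq_slope g g' zero_lt_one
    (fun t ht => (hg t ht).continuousAt.continuousWithinAt)
    (fun t ht => hg t (Ioo_subset_Icc_self ht))
  have := hmono (left_mem_Icc.2 zero_le_one) (Ioo_subset_Icc_self hξ) hξ.1.le
  rw [hslope, sub_zero, div_one] at this
  linarith

section

variable {E : Type*} [NormedAddCommGroup E] [NormedSpace ℝ E]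

lemma add_fderiv_le_of_fderiv_fderiv_nonneg {D : E → ℝ} {a w : E}
    (hD : ∀ t ∈ Icc (0 : ℝ) 1, ContDiffAt ℝ 2 D (a + t • w))
    (hH : ∀ t ∈ Icc (0 : ℝ) 1, 0 ≤ fderiv ℝ (fderiv ℝ D) (a + t • w) w w) :
    D a + fderiv ℝ D a w ≤ D (a + w) := by
  have hline : ∀ t : ℝ, HasDerivAt (fun s : ℝ => a + s • w) w t := fun t => by
    simpa using ((hasDerivAt_id t).smul_const w).const_add a
  have h := add_deriv_le_of_deriv2_nonneg (g := fun t => D (a + t • w))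
    (g' := fun t => fderiv ℝ D (a + t • w) w)
    (g'' := fun t => fderiv ℝ (fderiv ℝ D) (a + t • w) w w)
    (fun t ht => ((hD t ht).differentiableAt two_ne_zero).hasFDerivAt.comp_hasDerivAt t
      (hline t))
    (fun t ht => by
      have h1 := (((hD t ht).fderiv_right one_add_one_eq_two.le).differentiableAt
        one_ne_zero).hasFDerivAt.comp_hasDerivAt t (hline t)
      exact (ContinuousLinearMap.apply ℝ ℝ w).hasFDerivAt.comp_hasDerivAt t h1)
    hH
  simpa using h

lemma exists_pos_mul_norm_sq_le_of_pos [FiniteDimensional ℝ E] (H : E →L[ℝ] E →L[ℝ] ℝ)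
    (K : Submodule ℝ E) (hpos : ∀ w ∈ K, w ≠ 0 → 0 < H w w) :
    ∃ κ > 0, ∀ w ∈ K, κ * ‖w‖ ^ 2 ≤ H w w := by
  set S := (K : Set E) ∩ Metric.sphere 0 1
  have hnormalize : ∀ w ∈ K, w ≠ 0 → ‖w‖⁻¹ • w ∈ S := fun w hw hw0 =>
    ⟨K.smul_mem _ hw, by simp [norm_smul, norm_ne_zero_iff.2 hw0]⟩
  have hscale : ∀ w : E, w ≠ 0 → H w w = ‖w‖ ^ 2 * H (‖w‖⁻¹ • w) (‖w‖⁻¹ • w) := by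
    intro w hw0
    simp only [map_smul, FunLike.coe_smul, Pi.smul_apply, smul_eq_mul]
    field_simp
  rcases S.eq_empty_or_nonempty with hS | hS
  · refine ⟨1, one_pos, fun w hw => ?_⟩
    obtain rfl : w = 0 := by
      by_contra hw0
      exact hS.subset (hnormalize w hw hw0)
    simp
  have hcompact : IsCompact S :=
    (isCompact_sphere 0 1).inter_left K.closed_of_finiteDimensional
  obtain ⟨w₁, hw₁, hmin⟩ := hcompact.exists_isMinOn hS
    (H.continuous₂.comp (continuous_id.prodMk continuous_id)).continuousOn
  refine ⟨H w₁ w₁, hpos w₁ hw₁.1 (ne_zero_of_mem_unit_sphere ⟨w₁, hw₁.2⟩), fun w hw => ?_⟩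
  rcases eq_or_ne w 0 with rfl | hw0
  · simp
  rw [hscale w hw0, mul_comm]
  exact mul_le_mul_of_nonneg_left (hmin (hnormalize w hw hw0)) (sq_nonneg _)

lemma eventually_forall_nonneg_of_mul_norm_sq_le {X : Type*} [TopologicalSpace X]
    {H : X → E →L[ℝ] E →L[ℝ] ℝ} {c : X} (hH : ContinuousAt H c) {K : Set E} {κ : ℝ}
    (hκ : 0 < κ) (hc : ∀ w ∈ K, κ * ‖w‖ ^ 2 ≤ H c w w) :
    ∀ᶠ z in 𝓝 c, ∀ w ∈ K, 0 ≤ H z w w := by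
  filter_upwards [hH.eventually (Metric.ball_mem_nhds (H c) hκ)] with z hz w hw
  replace hz : ‖H z - H c‖ < κ := dist_eq_norm (H z) (H c) ▸ hz
  have hclose : |(H z - H c) w w| ≤ κ * ‖w‖ ^ 2 :=
    calc |(H z - H c) w w| ≤ ‖H z - H c‖ * ‖w‖ * ‖w‖ := (H z - H c).le_opNorm₂ w w
      _ = ‖H z - H c‖ * ‖w‖ ^ 2 := by ring
      _ ≤ κ * ‖w‖ ^ 2 := by gcongr
  have hsplit : H z w w = H c w w + (H z - H c) w w := by simp
  linarith [hc w hw, neg_abs_le ((H z - H c) w w)]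

lemma eventually_nonneg_of_fderiv_fderiv_nonneg {D : E → ℝ} {c : E} {K : Set E} {ρ : E → E}
    (hρ : ∀ y, dist (ρ y) c ≤ dist y c) (hρK : ∀ y, y - ρ y ∈ K)
    (hreg : ∀ᶠ y in 𝓝 c, ContDiffAt ℝ 2 D y ∧ ∀ w ∈ K, 0 ≤ fderiv ℝ (fderiv ℝ D) y w w)
    (hzero : ∀ᶠ y in 𝓝 c, D (ρ y) = 0 ∧ fderiv ℝ D (ρ y) = 0) :
    ∀ᶠ y in 𝓝 c, 0 ≤ D y := by
  obtain ⟨r, hr, hball⟩ := Metric.eventually_nhds_iff_ball.1 hreg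
  filter_upwards [Metric.ball_mem_nhds c hr, hzero] with y hy ⟨hDρ, hgrad⟩
  have hseg : ∀ t ∈ Icc (0 : ℝ) 1, ρ y + t • (y - ρ y) ∈ Metric.ball c r := fun t ht =>
    (convex_ball c r).add_smul_sub_mem ((hρ y).trans_lt hy) hy ht
  have h := add_fderiv_le_of_fderiv_fderiv_nonneg (fun t ht => (hball _ (hseg t ht)).1)
    (fun t ht => (hball _ (hseg t ht)).2 _ (hρK y))
  simpa [hDρ, hgrad] using h

lemma fderiv_fderiv_sub {F : Type*} [NormedAddCommGroup F] [NormedSpace ℝ F]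
    {f g : E → F} {x : E}
    (hf : ContDiffAt ℝ 2 f x) (hg : ContDiffAt ℝ 2 g x) :
    fderiv ℝ (fderiv ℝ (f - g)) x = fderiv ℝ (fderiv ℝ f) x - fderiv ℝ (fderiv ℝ g) x := by
  have hsub : fderiv ℝ (f - g) =ᶠ[𝓝 x] fderiv ℝ f - fderiv ℝ g := by
    filter_upwards [hf.eventually (by simp), hg.eventually (by simp)] with z hfz hgz
    exact fderiv_sub (hfz.differentiableAt two_ne_zero) (hgz.differentiableAt two_ne_zero)
  rw [hsub.fderiv_eq, fderiv_sub]
  · exact (hf.fderiv_right one_add_one_eq_two.le).differentiableAt one_ne_zero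
  · exact (hg.fderiv_right one_add_one_eq_two.le).differentiableAt one_ne_zero

end

lemma pder_eq_fderiv {n : ℕ} {Φ : (Fin n → ℝ) → ℝ} {y : Fin n → ℝ}
    (h : DifferentiableAt ℝ Φ y) (i : Fin n) :
    pder Φ i y = fderiv ℝ Φ y (Pi.single i 1) := by
  have hF : HasFDerivAt Φ (fderiv ℝ Φ y) (update y i (y i)) := by
    rw [update_eq_self]; exact h.hasFDerivAt
  exact (hF.comp_hasDerivAt (y i) (hasDerivAt_update y i (y i))).deriv

lemma Filter.EventuallyEq.pder_eq {n : ℕ} {Φ Ψ : (Fin n → ℝ) → ℝ} {y : Fin n → ℝ}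
    (h : Φ =ᶠ[𝓝 y] Ψ) (i : Fin n) : pder Φ i y = pder Ψ i y := by
  have hupdate : Tendsto (fun t => update y i t) (𝓝 (y i)) (𝓝 y) := by
    simpa using (hasDerivAt_update y i (y i)).continuousAt.tendsto
  have hcomp : (fun t => Φ (update y i t)) =ᶠ[𝓝 (y i)] fun t => Ψ (update y i t) :=
    hupdate.eventually h
  exact hcomp.deriv_eq

lemma pder2_eq_fderiv_fderiv {n : ℕ} {Φ : (Fin n → ℝ) → ℝ} {y : Fin n → ℝ}
    (h : ContDiffAt ℝ 2 Φ y) (i j : Fin n) :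
    pder2 Φ i j y = fderiv ℝ (fderiv ℝ Φ) y (Pi.single i 1) (Pi.single j 1) := by
  have hpder : pder Φ j =ᶠ[𝓝 y] fun z => fderiv ℝ Φ z (Pi.single j 1) := by
    filter_upwards [h.eventually (by simp)] with z hz
    exact pder_eq_fderiv (hz.differentiableAt two_ne_zero) j
  have hd : DifferentiableAt ℝ (fderiv ℝ Φ) y :=
    (h.fderiv_right one_add_one_eq_two.le).differentiableAt one_ne_zero
  rw [pder2, hpder.pder_eq, pder_eq_fderiv (hd.clm_apply (differentiableAt_const _)),
    fderiv_clm_apply hd (differentiableAt_const _)]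
  simp

lemma fderiv_eq_of_pder_eq {n : ℕ} {Φ Ψ : (Fin n → ℝ) → ℝ} {y : Fin n → ℝ}
    (hΦ : DifferentiableAt ℝ Φ y) (hΨ : DifferentiableAt ℝ Ψ y)
    (h : ∀ i, pder Φ i y = pder Ψ i y) : fderiv ℝ Φ y = fderiv ℝ Ψ y := by
  ext v
  rw [pi_eq_sum_univ' v]
  simp only [map_sum, map_smul, ← pder_eq_fderiv hΦ, ← pder_eq_fderiv hΨ, h]

lemma apply_apply_eq_sum_castSucc {m : ℕ}
    (H : (Fin (m + 1) → ℝ) →L[ℝ] (Fin (m + 1) → ℝ) →L[ℝ] ℝ) {u : Fin (m + 1) → ℝ}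
    (hu : u (Fin.last m) = 0) :
    H u u = ∑ i : Fin m, ∑ j : Fin m,
      u i.castSucc * u j.castSucc * H (Pi.single i.castSucc 1) (Pi.single j.castSucc 1) := by
  have hexpand : u = ∑ i : Fin m, u i.castSucc • Pi.single i.castSucc 1 := by
    conv_lhs => rw [pi_eq_sum_univ' u, Fin.sum_univ_castSucc, hu, zero_smul, add_zero]
  conv_lhs => rw [hexpand]
  simp only [map_sum, map_smul, FunLike.coe_sum, Finset.sum_apply,
    FunLike.coe_smul, Pi.smul_apply, smul_eq_mul, Finset.mul_sum]
  rw [Finset.sum_comm]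
  exact Finset.sum_congr rfl fun i _ => Finset.sum_congr rfl fun j _ => by ring

lemma fderiv_fderiv_sub_apply_self_pos {m : ℕ} {M N : (Fin (m + 1) → ℝ) → ℝ}
    {c : Fin (m + 1) → ℝ} (hM : ContDiffAt ℝ 2 M c) (hN : ContDiffAt ℝ 2 N c)
    (hpos : ∀ v : Fin m → ℝ, v ≠ 0 → 0 < ∑ i : Fin m, ∑ j : Fin m, v i * v j *
      (pder2 N i.castSucc j.castSucc c - pder2 M i.castSucc j.castSucc c))
    {u : Fin (m + 1) → ℝ} (hu : u (Fin.last m) = 0) (hu0 : u ≠ 0) :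
    0 < fderiv ℝ (fderiv ℝ (N - M)) c u u := by
  rw [apply_apply_eq_sum_castSucc _ hu]
  refine (hpos (fun i => u i.castSucc) fun hv => hu0 ?_).trans_eq ?_
  · ext i
    induction i using Fin.lastCases with
    | last => exact hu
    | cast i => exact congrFun hv i
  · simp [fderiv_fderiv_sub hN hM, pder2_eq_fderiv_fderiv hN, pder2_eq_fderiv_fderiv hM]

lemma apply_const_eq_of_iInf_le_of_le_iSup {ι : Type*} [Nonempty ι] {M : (ι → ℝ) → ℝ} {x : ℝ}
    (h : (⨅ _ : ι, x) ≤ M (fun _ => x) ∧ M (fun _ => x) ≤ ⨆ _ : ι, x) :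
    M (fun _ => x) = x := by
  rw [ciInf_const, ciSup_const] at h
  exact le_antisymm h.2 h.1

lemma locallySmaller_of_eventually_le {n : ℕ} {I : Set ℝ} (hI : IsOpen I)
    {M N : (Fin n → ℝ) → ℝ} (h : ∀ x ∈ I, ∀ᶠ y in 𝓝 (fun _ => x), M y ≤ N y) :
    LocallySmaller I M N := by
  choose V hle hVopen hxV using fun x hx => eventually_nhds_iff.1 (h x hx)
  have hIn : IsOpen {y : Fin n → ℝ | ∀ i, y i ∈ I} := by
    simpa only [Set.pi, mem_univ, true_imp_iff] using
      isOpen_set_pi finite_univ fun (_ : Fin n) _ => hI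
  refine ⟨(⋃ (x) (hx : x ∈ I), V x hx) ∩ {y | ∀ i, y i ∈ I},
    (isOpen_iUnion fun x => isOpen_iUnion (hVopen x)).inter hIn, inter_subset_right,
    fun x hx => ⟨mem_iUnion₂.2 ⟨x, hx, hxV x hx⟩, fun _ => hx⟩, ?_⟩
  rintro y ⟨hy, -⟩
  obtain ⟨x, hx, hyV⟩ := mem_iUnion₂.1 hy
  exact hle x hx y hyV

theorem stmt4_general {n : ℕ} (hn : 2 ≤ n) (I : Set ℝ) (hIopen : IsOpen I)
    (M N : (Fin n → ℝ) → ℝ)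
    (hM : ∀ x : Fin n → ℝ, (∀ i, x i ∈ I) → (⨅ i, x i) ≤ M x ∧ M x ≤ ⨆ i, x i)
    (hN : ∀ x : Fin n → ℝ, (∀ i, x i ∈ I) → (⨅ i, x i) ≤ N x ∧ N x ≤ ⨆ i, x i)
    (hMC2 : ∀ x ∈ I, ContDiffAt ℝ 2 M (fun _ => x))
    (hNC2 : ∀ x ∈ I, ContDiffAt ℝ 2 N (fun _ => x))
    (hder1 : ∀ x ∈ I, ∀ i : Fin n, pder M i (fun _ => x) = pder N i (fun _ => x))
    (hposdef : ∀ x ∈ I, ∀ v : Fin (n - 1) → ℝ, v ≠ 0 →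
      0 < ∑ i : Fin (n - 1), ∑ j : Fin (n - 1), v i * v j *
          (pder2 N (Fin.castLE (Nat.sub_le n 1) i) (Fin.castLE (Nat.sub_le n 1) j)
              (fun _ => x) -
            pder2 M (Fin.castLE (Nat.sub_le n 1) i) (Fin.castLE (Nat.sub_le n 1) j)
              (fun _ => x))) :
    LocallySmaller I M N := by
  obtain ⟨m, rfl⟩ : ∃ m, n = m + 1 := ⟨n - 1, by omega⟩
  have hdiag : ∀ x ∈ I, (N - M) (fun _ => x) = 0 := fun x hx => by
    rw [Pi.sub_apply, apply_const_eq_of_iInf_le_of_le_iSup (hN _ fun _ => hx),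
      apply_const_eq_of_iInf_le_of_le_iSup (hM _ fun _ => hx), sub_self]
  have hgrad : ∀ x ∈ I, fderiv ℝ (N - M) (fun _ => x) = 0 := fun x hx => by
    have hNd := (hNC2 x hx).differentiableAt two_ne_zero
    have hMd := (hMC2 x hx).differentiableAt two_ne_zero
    rw [fderiv_sub hNd hMd, fderiv_eq_of_pder_eq hNd hMd fun i => (hder1 x hx i).symm, sub_self]
  refine locallySmaller_of_eventually_le hIopen fun x₀ hx₀ => ?_
  have hD2 : ContDiffAt ℝ 2 (N - M) (fun _ => x₀) := (hNC2 x₀ hx₀).sub (hMC2 x₀ hx₀)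
  obtain ⟨κ, hκ, hcoercive⟩ := exists_pos_mul_norm_sq_le_of_pos _
    (LinearMap.ker (LinearMap.proj (R := ℝ) (φ := fun _ => ℝ) (Fin.last m))) fun u hu =>
      fderiv_fderiv_sub_apply_self_pos (hMC2 x₀ hx₀) (hNC2 x₀ hx₀) (hposdef x₀ hx₀) hu
  have hHcont : ContinuousAt (fderiv ℝ (fderiv ℝ (N - M))) (fun _ => x₀) :=
    ((hD2.fderiv_right one_add_one_eq_two.le).fderiv_right (m := 0) le_rfl).continuousAt
  have hlast : ∀ᶠ y in 𝓝 (fun _ => x₀), y (Fin.last m) ∈ I :=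
    (continuous_apply (Fin.last m)).continuousAt.preimage_mem_nhds (hIopen.mem_nhds hx₀)
  have hnonneg := eventually_nonneg_of_fderiv_fderiv_nonneg (ρ := fun y _ => y (Fin.last m))
    (fun y => by rw [dist_pi_const]; exact dist_le_pi_dist y (fun _ => x₀) (Fin.last m))
    (fun y => by simp)
    ((hD2.eventually (by simp)).and
      (eventually_forall_nonneg_of_mul_norm_sq_le hHcont hκ hcoercive))
    (hlast.mono fun y hy => ⟨hdiag _ hy, hgrad _ hy⟩)
  filter_upwards [hnonneg] with y hy
  simpa using hy

/-- Theorem PZ17, sufficiency part: if the means `M, N` on `Iⁿ` are twice continuously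
differentiable at every diagonal point, `(∂ᵢM)^Δ = (∂ᵢN)^Δ` for all `i`, and the
`(n-1)×(n-1)` matrix `((∂ᵢ∂ⱼN)^Δ - (∂ᵢ∂ⱼM)^Δ)_{i,j=1}^{n-1}` is positive definite at
every point of `I`, then `M` is locally smaller than `N`. -/
theorem stmt4 {n : ℕ} (hn : 2 ≤ n) (I : Set ℝ) (hIopen : IsOpen I)
    (hIconn : I.OrdConnected) (hIne : I.Nonempty)
    (M N : (Fin n → ℝ) → ℝ)
    (hM : ∀ x : Fin n → ℝ, (∀ i, x i ∈ I) → (⨅ i, x i) ≤ M x ∧ M x ≤ ⨆ i, x i)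
    (hN : ∀ x : Fin n → ℝ, (∀ i, x i ∈ I) → (⨅ i, x i) ≤ N x ∧ N x ≤ ⨆ i, x i)
    (hMC2 : ∀ x ∈ I, ContDiffAt ℝ 2 M (fun _ => x))
    (hNC2 : ∀ x ∈ I, ContDiffAt ℝ 2 N (fun _ => x))
    (hder1 : ∀ x ∈ I, ∀ i : Fin n, pder M i (fun _ => x) = pder N i (fun _ => x))
    (hposdef : ∀ x ∈ I, ∀ v : Fin (n - 1) → ℝ, v ≠ 0 →
      0 < ∑ i : Fin (n - 1), ∑ j : Fin (n - 1), v i * v j *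
          (pder2 N (Fin.castLE (Nat.sub_le n 1) i) (Fin.castLE (Nat.sub_le n 1) j)
              (fun _ => x) -
            pder2 M (Fin.castLE (Nat.sub_le n 1) i) (Fin.castLE (Nat.sub_le n 1) j)
              (fun _ => x))) :
    LocallySmaller I M N :=
  stmt4_general hn I hIopen M N hM hN hMC2 hNC2 hder1 hposdef
end

section
/- Let n ≥ 2, let f, g : I → ℝ be differentiable functions with nowhere vanishing first derivatives, and let p, q : I → ℝ_+^n be continuous. If A_{f,p} is locally smaller than A_{g,q}, then p_i/p_0 = q_i/q_0 on I for every i ∈ {1,…,n}. -/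
/-! Restrict both means to the line `t ↦ (x, …, x, t, x, …, x)` through the diagonal point
`(x, …, x)`, with `t` in slot `i`. Along it `A_{f,p}(t) = f⁻¹(f x + w(t) (f t - f x))` with
`w = pᵢ / (pᵢ + ∑_{j ≠ i} p_j(x))`; since `f t - f x` vanishes at `t = x`, only continuity of `w`
is needed, and the derivative at `x` is `pᵢ(x) / p₀(x)`, independently of `f`. Both means equal
`x` on the diagonal, so `A_{g,q} - A_{f,p}` has a local minimum at `x` along the line, and the two
derivatives agree. -/

open Set Function Real

open Filter Topology

section Calculus

variable {I : Set ℝ} {f : ℝ → ℝ} {x : ℝ}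

theorem ContinuousAt.mul_hasDerivAt_of_eq_zero {u v : ℝ → ℝ} {v' : ℝ} (hu : ContinuousAt u x)
    (hv : HasDerivAt v v' x) (hvx : v x = 0) :
    HasDerivAt (fun t => u t * v t) (u x * v') x := by
  rw [hasDerivAt_iff_tendsto_slope] at hv ⊢
  refine (hu.continuousWithinAt.tendsto.mul hv).congr' ?_
  filter_upwards [self_mem_nhdsWithin] with t ht
  simp only [slope_def_field, hvx, mul_zero, sub_zero]
  ring

theorem strictMonoOn_or_strictAntiOn_of_hasDerivAt_ne_zero {f' : ℝ → ℝ} (hIc : I.OrdConnected)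
    (hf : ∀ x ∈ I, HasDerivAt f (f' x) x) (hf' : ∀ x ∈ I, f' x ≠ 0) :
    StrictMonoOn f I ∨ StrictAntiOn f I := by
  have hfc : ContinuousOn f I := fun x hx => (hf x hx).continuousAt.continuousWithinAt
  have hf_int : ∀ x ∈ interior I, HasDerivWithinAt f (f' x) (interior I) x := fun x hx =>
    (hf x (interior_subset hx)).hasDerivWithinAt
  rcases hasDerivWithinAt_forall_lt_or_forall_gt_of_forall_ne hIc.convex
    (fun x hx => (hf x hx).hasDerivWithinAt) hf' with hneg | hpos
  · exact .inr <| strictAntiOn_of_hasDerivWithinAt_neg hIc.convex hfc hf_int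
      fun x hx => hneg x (interior_subset hx)
  · exact .inl <| strictMonoOn_of_hasDerivWithinAt_pos hIc.convex hfc hf_int
      fun x hx => hpos x (interior_subset hx)

theorem injOn_of_hasDerivAt_ne_zero {f' : ℝ → ℝ} (hIc : I.OrdConnected)
    (hf : ∀ x ∈ I, HasDerivAt f (f' x) x) (hf' : ∀ x ∈ I, f' x ≠ 0) : InjOn f I :=
  (strictMonoOn_or_strictAntiOn_of_hasDerivAt_ne_zero hIc hf hf').elim
    StrictMonoOn.injOn StrictAntiOn.injOn

theorem StrictMonoOn.image_mem_nhds (hI : IsOpen I) (hfc : ContinuousOn f I)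
    (hf : StrictMonoOn f I) (hx : x ∈ I) : f '' I ∈ 𝓝 (f x) := by
  obtain ⟨ε, hε, hball⟩ := Metric.isOpen_iff.1 hI x hx
  have hIcc : Icc (x - ε / 2) (x + ε / 2) ⊆ I := by
    rw [← Real.closedBall_eq_Icc]
    exact (Metric.closedBall_subset_ball (half_lt_self hε)).trans hball
  have hl : x - ε / 2 ∈ I := hIcc (left_mem_Icc.2 (by linarith))
  have hr : x + ε / 2 ∈ I := hIcc (right_mem_Icc.2 (by linarith))
  refine mem_of_superset (Ioo_mem_nhds (hf hl hx (by linarith)) (hf hx hr (by linarith))) ?_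
  calc Ioo (f (x - ε / 2)) (f (x + ε / 2)) ⊆ Icc (f (x - ε / 2)) (f (x + ε / 2)) :=
        Ioo_subset_Icc_self
    _ ⊆ f '' Icc (x - ε / 2) (x + ε / 2) := intermediate_value_Icc (by linarith) (hfc.mono hIcc)
    _ ⊆ f '' I := image_mono hIcc

theorem StrictMonoOn.hasDerivAt_invFunOn {f' : ℝ} (hI : IsOpen I) (hfc : ContinuousOn f I)
    (hf : StrictMonoOn f I) (hx : x ∈ I) (hfx : HasDerivAt f f' x) (hf' : f' ≠ 0) :
    HasDerivAt (invFunOn f I) f'⁻¹ (f x) := by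
  have hinv : LeftInvOn (invFunOn f I) f I := hf.injOn.leftInvOn_invFunOn
  have himg := hf.image_mem_nhds hI hfc hx
  have hmono : MonotoneOn (invFunOn f I) (f '' I) := by
    rintro _ ⟨a, ha, rfl⟩ _ ⟨b, hb, rfl⟩ hab
    rw [hinv ha, hinv hb]
    exact (hf.le_iff_le ha hb).1 hab
  have hcont : ContinuousAt (invFunOn f I) (f x) :=
    continuousAt_of_monotoneOn_of_image_mem_nhds hmono himg
      (by rw [hinv.image_image, hinv hx]; exact hI.mem_nhds hx)
  refine HasDerivAt.of_local_left_inverse hcont (by rwa [hinv hx]) hf' ?_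
  filter_upwards [himg] with y hy
  exact (surjOn_image f I).rightInvOn_invFunOn hy

end Calculus

section BajMean

variable {n : ℕ} {I : Set ℝ} {f : ℝ → ℝ} {p : Fin n → ℝ → ℝ} {x t : ℝ}

theorem bajMean_const (hf : InjOn f I) (hp : ∑ j, p j x ≠ 0) (hx : x ∈ I) :
    bajMean I f p (fun _ => x) = x := by
  rw [bajMean, ← Finset.sum_mul, mul_div_cancel_left₀ _ hp, hf.leftInvOn_invFunOn hx]

theorem invFunOn_neg (y : ℝ) : invFunOn (fun t => -f t) I (-y) = invFunOn f I y := by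
  have h : (fun a => a ∈ I ∧ -f a = -y) = fun a => a ∈ I ∧ f a = y := by
    simp only [neg_inj]
  simp only [invFunOn]
  rw [h]

theorem bajMean_neg : bajMean I (fun t => -f t) p = bajMean I f p := by
  ext x
  simp only [bajMean, mul_neg, Finset.sum_neg_distrib, neg_div, invFunOn_neg]

theorem sum_apply_update_const (F : Fin n → ℝ → ℝ) (i : Fin n) (x t : ℝ) :
    ∑ j, F j (update (fun _ => x) i t j) = F i t + ∑ j ∈ {i}ᶜ, F j x := by
  rw [Fintype.sum_eq_add_sum_compl i, update_self]
  congr 1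
  refine Finset.sum_congr rfl fun j hj => ?_
  rw [update_of_ne (by simpa using hj)]

theorem bajMean_update_const (hp : ∀ j, ∀ y ∈ I, 0 < p j y) (i : Fin n) (hx : x ∈ I)
    (ht : t ∈ I) :
    bajMean I f p (update (fun _ => x) i t) =
      invFunOn f I (f x + p i t / (p i t + ∑ j ∈ {i}ᶜ, p j x) * (f t - f x)) := by
  have hP : 0 ≤ ∑ j ∈ {i}ᶜ, p j x := Finset.sum_nonneg fun j _ => (hp j x hx).le
  have hden : p i t + ∑ j ∈ {i}ᶜ, p j x ≠ 0 := by linarith [hp i t ht]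
  rw [bajMean, sum_apply_update_const (fun j s => p j s * f s),
    sum_apply_update_const (fun j s => p j s), ← Finset.sum_mul]
  congr 1
  field_simp
  ring

theorem StrictMonoOn.hasDerivAt_bajMean_update {f' : ℝ} (hI : IsOpen I)
    (hfc : ContinuousOn f I) (hf : StrictMonoOn f I) (hfx : HasDerivAt f f' x) (hf' : f' ≠ 0)
    (hp : ∀ j, ∀ y ∈ I, 0 < p j y) (i : Fin n) (hpc : ContinuousAt (p i) x) (hx : x ∈ I) :
    HasDerivAt (fun t => bajMean I f p (update (fun _ => x) i t)) (p i x / ∑ j, p j x) x := by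
  set P := ∑ j ∈ {i}ᶜ, p j x
  have hP : 0 ≤ P := Finset.sum_nonneg fun j _ => (hp j x hx).le
  have hpi := hp i x hx
  have hsum : ∑ j, p j x = p i x + P := Fintype.sum_eq_add_sum_compl i fun j => p j x
  set S : ℝ → ℝ := fun t => f x + p i t / (p i t + P) * (f t - f x)
  have hw : ContinuousAt (fun t => p i t / (p i t + P)) x :=
    hpc.div (hpc.add continuousAt_const) (by show p i x + P ≠ 0; linarith)
  have hS : HasDerivAt S (p i x / (p i x + P) * f') x :=
    (hw.mul_hasDerivAt_of_eq_zero (hfx.sub_const (f x)) (sub_self _)).const_add (f x)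
  have hSx : S x = f x := by simp [S]
  have hinv := hf.hasDerivAt_invFunOn hI hfc hx hfx hf'
  rw [← hSx] at hinv
  have hcomp : HasDerivAt (invFunOn f I ∘ S) (p i x / ∑ j, p j x) x := by
    refine (hinv.comp x hS).congr_deriv ?_
    rw [hsum]
    field_simp
  refine hcomp.congr_of_eventuallyEq ?_
  filter_upwards [hI.mem_nhds hx] with t ht
  exact bajMean_update_const hp i hx ht

end BajMean

theorem hasDerivAt_bajMean_update {n : ℕ} {I : Set ℝ} {f f' : ℝ → ℝ} {p : Fin n → ℝ → ℝ}
    {x : ℝ} (hI : IsOpen I) (hIc : I.OrdConnected) (hf : ∀ x ∈ I, HasDerivAt f (f' x) x)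
    (hf' : ∀ x ∈ I, f' x ≠ 0) (hp : ∀ j, ∀ y ∈ I, 0 < p j y) (i : Fin n)
    (hpc : ContinuousOn (p i) I) (hx : x ∈ I) :
    HasDerivAt (fun t => bajMean I f p (update (fun _ => x) i t)) (p i x / ∑ j, p j x) x := by
  have hfc : ContinuousOn f I := fun y hy => (hf y hy).continuousAt.continuousWithinAt
  have hpx : ContinuousAt (p i) x := hpc.continuousAt (hI.mem_nhds hx)
  rcases strictMonoOn_or_strictAntiOn_of_hasDerivAt_ne_zero hIc hf hf' with hmono | hanti
  · exact hmono.hasDerivAt_bajMean_update hI hfc (hf x hx) (hf' x hx) hp i hpx hx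
  · rw [← bajMean_neg]
    exact hanti.neg.hasDerivAt_bajMean_update hI hfc.neg (hf x hx).neg (neg_ne_zero.2 (hf' x hx))
      hp i hpx hx

theorem LocallySmaller.hasDerivAt_update_unique {n : ℕ} {I : Set ℝ}
    {M N : (Fin n → ℝ) → ℝ} (h : LocallySmaller I M N) {x a b : ℝ} (hx : x ∈ I)
    (hMN : M (fun _ => x) = N (fun _ => x)) (i : Fin n)
    (hM : HasDerivAt (fun t => M (update (fun _ => x) i t)) a x)
    (hN : HasDerivAt (fun t => N (update (fun _ => x) i t)) b x) : a = b := by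
  obtain ⟨U, hU, -, hdiag, hle⟩ := h
  have hline : Continuous fun t : ℝ => update (fun _ : Fin n => x) i t :=
    continuous_const.update i continuous_id
  have hxU : (fun t : ℝ => update (fun _ : Fin n => x) i t) ⁻¹' U ∈ 𝓝 x := by
    refine (hU.preimage hline).mem_nhds ?_
    rw [mem_preimage, update_eq_self]
    exact hdiag x hx
  have hmin :
      IsLocalMin (fun t => N (update (fun _ => x) i t) - M (update (fun _ => x) i t)) x := by
    filter_upwards [hxU] with t ht
    rw [update_eq_self, hMN, sub_self, sub_nonneg]
    exact hle _ ht
  exact (sub_eq_zero.1 (hmin.hasDerivAt_eq_zero (hN.sub hM))).symm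

theorem stmt5_general {n : ℕ} (I : Set ℝ) (hIopen : IsOpen I)
    (hIconn : I.OrdConnected)
    (f f' g g' : ℝ → ℝ) (p q : Fin n → ℝ → ℝ)
    (hf : ∀ x ∈ I, HasDerivAt f (f' x) x) (hf'0 : ∀ x ∈ I, f' x ≠ 0)
    (hg : ∀ x ∈ I, HasDerivAt g (g' x) x) (hg'0 : ∀ x ∈ I, g' x ≠ 0)
    (hp : ∀ i, ∀ x ∈ I, 0 < p i x) (hq : ∀ i, ∀ x ∈ I, 0 < q i x)
    (hpc : ∀ i, ContinuousOn (p i) I) (hqc : ∀ i, ContinuousOn (q i) I)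
    (hloc : LocallySmaller I (bajMean I f p) (bajMean I g q)) :
    ∀ i : Fin n, ∀ x ∈ I, p i x / (∑ j, p j x) = q i x / (∑ j, q j x) := by
  intro i x hx
  have hdiag : bajMean I f p (fun _ => x) = bajMean I g q (fun _ => x) := by
    rw [bajMean_const (injOn_of_hasDerivAt_ne_zero hIconn hf hf'0)
        (Finset.sum_pos (fun j _ => hp j x hx) ⟨i, Finset.mem_univ i⟩).ne' hx,
      bajMean_const (injOn_of_hasDerivAt_ne_zero hIconn hg hg'0)
        (Finset.sum_pos (fun j _ => hq j x hx) ⟨i, Finset.mem_univ i⟩).ne' hx]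
  exact hloc.hasDerivAt_update_unique hx hdiag i
    (hasDerivAt_bajMean_update hIopen hIconn hf hf'0 hp i (hpc i) hx)
    (hasDerivAt_bajMean_update hIopen hIconn hg hg'0 hq i (hqc i) hx)

/-- Theorem 1NC, first-order necessary condition: if `f, g` are differentiable with
nonvanishing first derivatives, `p, q : I → ℝ₊ⁿ` are continuous and `A_{f,p}` is
locally smaller than `A_{g,q}`, then `pᵢ/p₀ = qᵢ/q₀` on `I` for all `i`. -/
theorem stmt5 {n : ℕ} (hn : 2 ≤ n) (I : Set ℝ) (hIopen : IsOpen I)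
    (hIconn : I.OrdConnected) (hIne : I.Nonempty)
    (f f' g g' : ℝ → ℝ) (p q : Fin n → ℝ → ℝ)
    (hf : ∀ x ∈ I, HasDerivAt f (f' x) x) (hf'0 : ∀ x ∈ I, f' x ≠ 0)
    (hg : ∀ x ∈ I, HasDerivAt g (g' x) x) (hg'0 : ∀ x ∈ I, g' x ≠ 0)
    (hp : ∀ i, ∀ x ∈ I, 0 < p i x) (hq : ∀ i, ∀ x ∈ I, 0 < q i x)
    (hpc : ∀ i, ContinuousOn (p i) I) (hqc : ∀ i, ContinuousOn (q i) I)
    (hloc : LocallySmaller I (bajMean I f p) (bajMean I g q)) :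
    ∀ i : Fin n, ∀ x ∈ I, p i x / (∑ j, p j x) = q i x / (∑ j, q j x) :=
  stmt5_general I hIopen hIconn f f' g g' p q hf hf'0 hg hg'0 hp hq hpc hqc hloc
end
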